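/- arXiv:1403.6741 — 3 statements merged into one kernel-verified Lean document; each statement's English description precedes it below -/
import Mathlib

section
/- Let z be a vector of n i.i.d. rate-1 exponential random variables, A an m×n real matrix, and b ∈ R^m. Suppose there is a row r and a column i with A_{r,i} > 0, A_{r,j} = 0 for all j ≠ i, and b_r ≥ 0. Then P(Az > b componentwise) = e^{-b_r/A_{r,i}} · P(A' z' > b' − (b_r/A_{r,i}) a', where A' is A with row r deleted, b' is b with entry r deleted, a' is the i-th column of A with its r-th entry deleted, and z' has the same distribution as z). -/
open MeasureTheory ProbabilityTheory Real

/-- The product measure of `n` i.i.d. rate-1 exponential random variables. -/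
noncomputable def iidExp (ι : Type*) [Fintype ι] : Measure (ι → ℝ) :=
  haveI : IsProbabilityMeasure (expMeasure 1) := isProbabilityMeasure_expMeasure one_pos
  Measure.pi fun _ => expMeasure 1

/-!
Row `r` of `A z > b` says exactly `z i > c` with `c = b r / A r i ≥ 0`. By memorylessness the
exponential law restricted to `(c, ∞)` is `e^{-c}` times its translate by `c`, and in the product
measure only coordinate `i` is affected. Hence the probability of the event is `e^{-c}` times the
probability that `z + c eᵢ` satisfies the remaining rows, i.e. that `z` satisfies them with
right-hand sides lowered by `c` times column `i`.
-/

open Set Function Matrix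
open scoped ENNReal

lemma MeasureTheory.Measure.map_add_right_withDensity {G : Type*} [MeasurableSpace G] [AddGroup G]
    [MeasurableAdd G] (μ : Measure G) [μ.IsAddRightInvariant] (g : G → ℝ≥0∞) (c : G) :
    (μ.withDensity g).map (· + c) = μ.withDensity fun x ↦ g (x - c) := by
  ext s hs
  rw [Measure.map_apply (measurable_add_const c) hs, withDensity_apply _ hs,
    withDensity_apply _ (measurable_add_const c hs),
    ← (measurePreserving_add_right μ c).setLIntegral_comp_preimage_emb
      (measurableEmbedding_addRight c) (fun y ↦ g (y - c)) s]
  simp only [add_sub_cancel_right]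

lemma ProbabilityTheory.indicator_Ici_exponentialPDF (r : ℝ) {c : ℝ} (hc : 0 ≤ c) (x : ℝ) :
    (Ici c).indicator (exponentialPDF r) x
      = ENNReal.ofReal (exp (-(r * c))) * exponentialPDF r (x - c) := by
  by_cases hx : c ≤ x
  · rw [indicator_of_mem (show x ∈ Ici c from hx), exponentialPDF_of_nonneg (hc.trans hx),
      exponentialPDF_of_nonneg (sub_nonneg.2 hx), ← ENNReal.ofReal_mul (exp_nonneg _)]
    congr 1
    rw [mul_left_comm, ← exp_add]
    ring_nf
  · rw [indicator_of_notMem (show x ∉ Ici c from hx), exponentialPDF_of_neg (by linarith),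
      mul_zero]

lemma ProbabilityTheory.expMeasure_restrict_Ioi (r : ℝ) {c : ℝ} (hc : 0 ≤ c) :
    (expMeasure r).restrict (Ioi c)
      = ENNReal.ofReal (exp (-(r * c))) • (expMeasure r).map (· + c) := by
  have hpdf : expMeasure r = volume.withDensity (exponentialPDF r) := rfl
  rw [hpdf, restrict_withDensity measurableSet_Ioi, ← withDensity_indicator measurableSet_Ioi,
    Measure.map_add_right_withDensity,
    ← withDensity_smul _ (f := fun x ↦ exponentialPDF r (x - c))
      ((measurable_exponentialPDFReal r).ennreal_ofReal.comp (measurable_sub_const c))]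
  refine withDensity_congr_ae ?_
  filter_upwards [indicator_ae_eq_of_ae_eq_set (f := exponentialPDF r) Ioi_ae_eq_Ici] with x hx
  rw [hx, indicator_Ici_exponentialPDF r hc]
  rfl

lemma MeasureTheory.Measure.restrict_pi_eval_preimage_eq_smul_map {ι : Type*} [Fintype ι]
    [DecidableEq ι] {α : ι → Type*} [∀ i, MeasurableSpace (α i)] (μ : ∀ i, Measure (α i))
    [∀ i, SigmaFinite (μ i)] {i : ι} {s : Set (α i)} {k : ℝ≥0∞} {f : α i → α i}
    (hf : Measurable f) (h : (μ i).restrict s = k • (μ i).map f) :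
    (Measure.pi μ).restrict (eval i ⁻¹' s)
      = k • (Measure.pi μ).map fun x ↦ update x i (f (x i)) := by
  have hT : Measurable fun x : ∀ j, α j ↦ update x i (f (x i)) := by fun_prop
  rw [← univ_pi_update_univ, restrict_pi_pi]
  refine pi_eq fun t ht ↦ ?_
  have hpre : (fun x ↦ update x i (f (x i))) ⁻¹' univ.pi t
      = univ.pi (update t i (f ⁻¹' t i)) := by
    ext x
    simp only [mem_preimage, mem_univ_pi]
    refine forall_congr' fun j ↦ ?_
    rcases eq_or_ne j i with rfl | hj <;> simp [*]
  rw [smul_apply, map_apply hT (.univ_pi ht), smul_eq_mul, hpre, pi_pi,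
    ← Finset.mul_prod_erase _ _ (Finset.mem_univ i),
    ← Finset.mul_prod_erase _ _ (Finset.mem_univ i)]
  simp only [update_self, h, smul_apply, map_apply hf (ht i), smul_eq_mul, mul_assoc]
  congr 2
  refine Finset.prod_congr rfl fun j hj ↦ ?_
  simp [Finset.ne_of_mem_erase hj]

lemma iidExp_restrict_lt_eval {ι : Type*} [Fintype ι] [DecidableEq ι] (i : ι) {c : ℝ}
    (hc : 0 ≤ c) :
    (iidExp ι).restrict {z | c < z i}
      = ENNReal.ofReal (exp (-c)) • (iidExp ι).map fun z ↦ update z i (z i + c) := by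
  have : IsProbabilityMeasure (expMeasure 1) := isProbabilityMeasure_expMeasure one_pos
  have := Measure.restrict_pi_eval_preimage_eq_smul_map (fun _ : ι ↦ expMeasure 1) (i := i)
    (measurable_add_const c) (expMeasure_restrict_Ioi 1 hc)
  rwa [one_mul] at this

namespace Matrix

variable {m n R : Type*} [Fintype n] [NonUnitalNonAssocSemiring R]

lemma mulVec_apply_of_forall_ne_eq_zero {A : Matrix m n R} {r : m} {i : n}
    (h : ∀ j, j ≠ i → A r j = 0) (z : n → R) : (A *ᵥ z) r = A r i * z i :=
  Finset.sum_eq_single i (fun j _ hj ↦ by simp [h j hj]) (by simp)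

lemma mulVec_update_add [DecidableEq n] (A : Matrix m n R) (z : n → R) (i : n) (c : R) :
    A *ᵥ update z i (z i + c) = A *ᵥ z + fun k ↦ A k i * c := by
  have : update z i (z i + c) = z + Pi.single i c := by
    ext j; rcases eq_or_ne j i with rfl | hj <;> simp [*]
  ext k
  simp [this, mulVec_add, mulVec_single]

end Matrix

/-- Memoryless elimination of a row with a single nonzero (positive) entry:
$P(Az > b) = e^{-b_r/A_{r,i}} P(A' z > b' - (b_r/A_{r,i}) a')$ where $A', b', a'$ are obtained
by deleting row $r$ (and $a'$ is the $i$-th column of $A$ with entry $r$ deleted). -/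
theorem row_elimination (m n : ℕ) (A : Matrix (Fin (m + 1)) (Fin n) ℝ) (b : Fin (m + 1) → ℝ)
    (r : Fin (m + 1)) (i : Fin n) (hpos : 0 < A r i) (hzero : ∀ j, j ≠ i → A r j = 0)
    (hb : 0 ≤ b r) :
    iidExp (Fin n) {z | ∀ k, b k < A.mulVec z k}
      = ENNReal.ofReal (Real.exp (-(b r / A r i)))
        * iidExp (Fin n) {z | ∀ k : Fin m,
            b (r.succAbove k) - (b r / A r i) * A (r.succAbove k) i
              < (A.submatrix r.succAbove id).mulVec z k} := by
  set c := b r / A r i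
  set C := {z : Fin n → ℝ | ∀ k, b (r.succAbove k) < (A *ᵥ z) (r.succAbove k)}
  have hC : MeasurableSet C := by
    simp only [C, ofPred_forall]
    exact .iInter fun k ↦ measurableSet_lt measurable_const (by fun_prop)
  have hL : {z | ∀ k, b k < (A *ᵥ z) k} = C ∩ {z | c < z i} := by
    ext z
    rw [mem_ofPred_eq, Fin.forall_iff_succAbove r, mulVec_apply_of_forall_ne_eq_zero hzero,
      mul_comm, ← div_lt_iff₀ hpos]
    exact and_comm
  have hR : {z | ∀ k : Fin m, b (r.succAbove k) - c * A (r.succAbove k) i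
      < (A.submatrix r.succAbove id *ᵥ z) k} = (fun z ↦ update z i (z i + c)) ⁻¹' C := by
    ext z
    simp only [mem_ofPred_eq, mem_preimage, C, mulVec_update_add, Pi.add_apply, sub_lt_iff_lt_add,
      mul_comm c]
    rfl
  rw [hL, hR, ← Measure.restrict_apply hC, iidExp_restrict_lt_eval i (div_nonneg hb hpos.le),
    Measure.smul_apply, Measure.map_apply (by fun_prop) hC, smul_eq_mul]
end

section
/- For a Rayleigh fading MAC with 2 i.i.d. links, the non-outage probability equals e^{-λ(2^{r_1+r_2}−1)} · (1 + λ(2^{r_1}−1)(2^{r_2}−1)), where λ > 0 and r_1, r_2 ≥ 0. Formally: if z_1, z_2 are i.i.d. rate-1 exponentials, then P(z_1 ≥ λ(2^{r_1}−1), z_2 ≥ λ(2^{r_2}−1), z_1 + z_2 ≥ λ(2^{r_1+r_2}−1)) = e^{-λ(2^{r_1+r_2}−1)}(1 + λ(2^{r_1}−1)(2^{r_2}−1)). -/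
/-!
Slicing along the first coordinate, the event `{a ≤ x, b ≤ y, c ≤ x + y}` with `a + b ≤ c`
has conditional probability `e^{-max(b, c - x)}` given `x ≥ a`. Integrating against `e^{-x}`
gives `e^{-c}` times the length `c - a - b` of the range where the sum constraint binds, plus
`e^{-c}` from the range where it does not. For the MAC, `c - a - b = λ (2^{r₁} - 1)(2^{r₂} - 1)`
because `2^{r₁ + r₂} = 2^{r₁} 2^{r₂}`.
-/

open MeasureTheory ProbabilityTheory Real

open Set ENNReal

instance isProbabilityMeasure_expMeasure_one : IsProbabilityMeasure (expMeasure 1) :=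
  isProbabilityMeasure_expMeasure one_pos

lemma lintegral_exp_neg_Ici (t : ℝ) :
    ∫⁻ x in Ici t, ENNReal.ofReal (exp (-x)) = ENNReal.ofReal (exp (-t)) := by
  rw [← setLIntegral_congr Ioi_ae_eq_Ici, ← ofReal_integral_eq_lintegral_ofReal,
    integral_exp_neg_Ioi]
  · exact (by simpa using exp_neg_integrableOn_Ioi t one_pos :
      IntegrableOn (fun x : ℝ => exp (-x)) (Ioi t))
  · exact Filter.Eventually.of_forall fun x => (exp_pos _).le

lemma setLIntegral_expMeasure_one {s : Set ℝ} (hs : MeasurableSet s) (hs0 : s ⊆ Ici 0)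
    {f : ℝ → ℝ≥0∞} (hf : Measurable f) :
    ∫⁻ x in s, f x ∂expMeasure 1 = ∫⁻ x in s, ENNReal.ofReal (exp (-x)) * f x := by
  rw [expMeasure, gammaMeasure, restrict_withDensity hs,
    lintegral_withDensity_eq_lintegral_mul _
    (f := gammaPDF 1 1) (measurable_gammaPDFReal 1 1).ennreal_ofReal hf]
  refine setLIntegral_congr_fun hs fun x hx => ?_
  rw [Pi.mul_apply, show gammaPDF 1 1 x = exponentialPDF 1 x from rfl,
    exponentialPDF_of_nonneg (hs0 hx)]
  norm_num

lemma expMeasure_one_Ici {t : ℝ} (ht : 0 ≤ t) :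
    expMeasure 1 (Ici t) = ENNReal.ofReal (exp (-t)) := by
  rw [← setLIntegral_one, setLIntegral_expMeasure_one measurableSet_Ici
    (Ici_subset_Ici.mpr ht) measurable_const]
  simpa using lintegral_exp_neg_Ici t

lemma iidExp_fin_two_preimage {S : Set (ℝ × ℝ)} (hS : MeasurableSet S) :
    iidExp (Fin 2) (MeasurableEquiv.finTwoArrow ⁻¹' S) = (expMeasure 1).prod (expMeasure 1) S :=
  (measurePreserving_finTwoArrow (expMeasure 1)).measure_preimage hS.nullMeasurableSet

def nonOutageRegion (a b c : ℝ) : Set (ℝ × ℝ) :=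
  {p | a ≤ p.1 ∧ b ≤ p.2 ∧ c ≤ p.1 + p.2}

lemma measurableSet_nonOutageRegion (a b c : ℝ) : MeasurableSet (nonOutageRegion a b c) :=
  (measurableSet_le measurable_const measurable_fst).inter <|
    (measurableSet_le measurable_const measurable_snd).inter
      (measurableSet_le measurable_const (measurable_fst.add measurable_snd))

lemma expMeasure_one_preimage_mk_nonOutageRegion {a b : ℝ} (c : ℝ) (hb : 0 ≤ b) (x : ℝ) :
    expMeasure 1 (Prod.mk x ⁻¹' nonOutageRegion a b c)
      = (Ici a).indicator (fun x => ENNReal.ofReal (exp (-max b (c - x)))) x := by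
  by_cases hx : a ≤ x
  · have hslice : Prod.mk x ⁻¹' nonOutageRegion a b c = Ici (max b (c - x)) := by
      ext y
      simp only [nonOutageRegion, mem_preimage, mem_ofPred_eq, mem_Ici, max_le_iff]
      constructor
      · rintro ⟨-, hby, hcy⟩
        exact ⟨hby, by linarith⟩
      · rintro ⟨hby, hcy⟩
        exact ⟨hx, hby, by linarith⟩
    rw [indicator_of_mem (mem_Ici.mpr hx), hslice, expMeasure_one_Ici (le_max_of_le_left hb)]
  · have hslice : Prod.mk x ⁻¹' nonOutageRegion a b c = ∅ :=
      eq_empty_of_forall_notMem fun y hy => hx hy.1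
    rw [indicator_of_notMem (fun h => hx (mem_Ici.mp h)), hslice, measure_empty]

lemma lintegral_exp_neg_mul_exp_neg_max {a b c : ℝ} (habc : a + b ≤ c) :
    ∫⁻ x in Ici a, ENNReal.ofReal (exp (-x)) * ENNReal.ofReal (exp (-max b (c - x)))
      = ENNReal.ofReal (exp (-c) * (1 + (c - a - b))) := by
  have hdisj : Disjoint (Ico a (c - b)) (Ici (c - b)) :=
    disjoint_left.mpr fun x hx₁ hx₂ => (not_le.mpr hx₁.2) hx₂
  have hbinding : ∫⁻ x in Ico a (c - b),
      ENNReal.ofReal (exp (-x)) * ENNReal.ofReal (exp (-max b (c - x)))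
        = ENNReal.ofReal (exp (-c) * (c - b - a)) := by
    rw [setLIntegral_congr_fun (g := fun _ => ENNReal.ofReal (exp (-c))) measurableSet_Ico
      fun x hx => ?_]
    · rw [setLIntegral_const, Real.volume_Ico, ← ENNReal.ofReal_mul (exp_pos _).le]
    · rw [max_eq_right (by linarith [hx.2]), ← ENNReal.ofReal_mul (exp_pos _).le, ← exp_add]
      ring_nf
  have hslack : ∫⁻ x in Ici (c - b),
      ENNReal.ofReal (exp (-x)) * ENNReal.ofReal (exp (-max b (c - x)))
        = ENNReal.ofReal (exp (-c)) := by
    rw [setLIntegral_congr_fun (g := fun x => ENNReal.ofReal (exp (-b)) * ENNReal.ofReal (exp (-x)))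
      measurableSet_Ici fun x hx => by rw [max_eq_left (by linarith [mem_Ici.mp hx]), mul_comm],
      lintegral_const_mul _ measurable_neg.exp.ennreal_ofReal, lintegral_exp_neg_Ici,
      ← ENNReal.ofReal_mul (exp_pos _).le, ← exp_add]
    ring_nf
  rw [← Ico_union_Ici_eq_Ici (by linarith : a ≤ c - b), lintegral_union measurableSet_Ici hdisj,
    hbinding, hslack, ← ENNReal.ofReal_add (by nlinarith [exp_pos (-c)]) (exp_pos _).le]
  ring_nf

lemma expMeasure_one_prod_nonOutageRegion {a b c : ℝ} (ha : 0 ≤ a) (hb : 0 ≤ b)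
    (habc : a + b ≤ c) :
    (expMeasure 1).prod (expMeasure 1) (nonOutageRegion a b c)
      = ENNReal.ofReal (exp (-c) * (1 + (c - a - b))) := by
  rw [Measure.prod_apply (measurableSet_nonOutageRegion a b c),
    lintegral_congr (expMeasure_one_preimage_mk_nonOutageRegion c hb),
    lintegral_indicator measurableSet_Ici,
    setLIntegral_expMeasure_one measurableSet_Ici (Ici_subset_Ici.mpr ha)
      (by fun_prop : Measurable fun x : ℝ => ENNReal.ofReal (exp (-max b (c - x)))),
    lintegral_exp_neg_mul_exp_neg_max habc]

/-- Exact non-outage probability of a 2-link i.i.d. Rayleigh MAC. -/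
theorem mac2_nonoutage (lam r1 r2 : ℝ) (hlam : 0 < lam) (hr1 : 0 ≤ r1) (hr2 : 0 ≤ r2) :
    iidExp (Fin 2) {z | lam * ((2 : ℝ) ^ r1 - 1) ≤ z 0 ∧ lam * ((2 : ℝ) ^ r2 - 1) ≤ z 1 ∧
        lam * ((2 : ℝ) ^ (r1 + r2) - 1) ≤ z 0 + z 1}
      = ENNReal.ofReal (Real.exp (-(lam * ((2 : ℝ) ^ (r1 + r2) - 1)))
          * (1 + lam * ((2 : ℝ) ^ r1 - 1) * ((2 : ℝ) ^ r2 - 1))) := by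
  have h1 : 0 ≤ (2 : ℝ) ^ r1 - 1 := sub_nonneg.mpr (one_le_rpow one_le_two hr1)
  have h2 : 0 ≤ (2 : ℝ) ^ r2 - 1 := sub_nonneg.mpr (one_le_rpow one_le_two hr2)
  have hgap : lam * ((2 : ℝ) ^ (r1 + r2) - 1) - lam * ((2 : ℝ) ^ r1 - 1)
      - lam * ((2 : ℝ) ^ r2 - 1) = lam * ((2 : ℝ) ^ r1 - 1) * ((2 : ℝ) ^ r2 - 1) := by
    rw [rpow_add two_pos]
    ring
  have hgap_nonneg : 0 ≤ lam * ((2 : ℝ) ^ r1 - 1) * ((2 : ℝ) ^ r2 - 1) := by positivity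
  rw [← hgap]
  exact (iidExp_fin_two_preimage (measurableSet_nonOutageRegion _ _ _)).trans
    (expMeasure_one_prod_nonOutageRegion (by positivity) (by positivity) (by linarith))
end

section
/- For all λ > 0 and r_1, r_2 ≥ 0, if z_1, z_2 are i.i.d. rate-1 exponentials, then P(z_1 ≥ λ(2^{r_1}−1), z_2 ≥ λ(2^{r_2}−1), z_1 + z_2 ≥ λ(2^{r_1+r_2}−1)) ≥ e^{-λ(2^{r_1+r_2}−1)}. -/
/-!
Since `2^(r₁+r₂) - 1 = (2^r₁ - 1) + 2^r₁ (2^r₂ - 1)`, the thresholds `c₁ = λ(2^r₁ - 1)` and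
`c₂ = 2^r₁ λ(2^r₂ - 1) ≥ λ(2^r₂ - 1)` add up to `λ(2^(r₁+r₂) - 1)`, so the orthant
`{z₁ > c₁, z₂ > c₂}` lies in the non-outage region. By independence its probability is
`e^(-c₁) e^(-c₂) = e^(-λ(2^(r₁+r₂) - 1))`.
-/

open MeasureTheory ProbabilityTheory Real

namespace ProbabilityTheory

lemma measure_Ioi_eq_one_sub_cdf (μ : Measure ℝ) [IsProbabilityMeasure μ] (x : ℝ) :
    μ (Set.Ioi x) = ENNReal.ofReal (1 - cdf μ x) := by
  rw [← measure_cdf μ, StieltjesFunction.measure_Ioi _ (tendsto_cdf_atTop μ), measure_cdf]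

lemma expMeasure_Ioi {r : ℝ} (hr : 0 < r) {x : ℝ} (hx : 0 ≤ x) :
    expMeasure r (Set.Ioi x) = ENNReal.ofReal (exp (-(r * x))) := by
  have := isProbabilityMeasure_expMeasure hr
  rw [measure_Ioi_eq_one_sub_cdf, cdf_expMeasure_eq hr, if_pos hx, sub_sub_cancel]

end ProbabilityTheory

lemma iidExp_pi_Ioi {ι : Type*} [Fintype ι] {c : ι → ℝ} (hc : 0 ≤ c) :
    iidExp ι (Set.univ.pi fun i => Set.Ioi (c i)) = ENNReal.ofReal (exp (-∑ i, c i)) := by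
  have := isProbabilityMeasure_expMeasure one_pos
  rw [iidExp, Measure.pi_pi, ← Finset.sum_neg_distrib, exp_sum,
    ENNReal.ofReal_prod_of_nonneg fun i _ => (exp_pos _).le]
  simp only [expMeasure_Ioi one_pos (hc _), one_mul]

/-- Weak lower bound on the 2-link MAC non-outage probability. -/
theorem mac2_nonoutage_lower (lam r1 r2 : ℝ) (hlam : 0 < lam) (hr1 : 0 ≤ r1) (hr2 : 0 ≤ r2) :
    ENNReal.ofReal (Real.exp (-(lam * ((2 : ℝ) ^ (r1 + r2) - 1))))
      ≤ iidExp (Fin 2) {z | lam * ((2 : ℝ) ^ r1 - 1) ≤ z 0 ∧ lam * ((2 : ℝ) ^ r2 - 1) ≤ z 1 ∧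
          lam * ((2 : ℝ) ^ (r1 + r2) - 1) ≤ z 0 + z 1} := by
  have ha : 0 ≤ lam * ((2 : ℝ) ^ r1 - 1) :=
    mul_nonneg hlam.le (sub_nonneg.2 (one_le_rpow one_le_two hr1))
  have hb : 0 ≤ lam * ((2 : ℝ) ^ r2 - 1) :=
    mul_nonneg hlam.le (sub_nonneg.2 (one_le_rpow one_le_two hr2))
  have hb_le : lam * ((2 : ℝ) ^ r2 - 1) ≤ 2 ^ r1 * (lam * (2 ^ r2 - 1)) :=
    le_mul_of_one_le_left hb (one_le_rpow one_le_two hr1)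
  have hsum : lam * ((2 : ℝ) ^ r1 - 1) + 2 ^ r1 * (lam * (2 ^ r2 - 1)) =
      lam * (2 ^ (r1 + r2) - 1) := by
    rw [rpow_add two_pos]; ring
  set c : Fin 2 → ℝ := ![lam * (2 ^ r1 - 1), 2 ^ r1 * (lam * (2 ^ r2 - 1))]
  have hc : 0 ≤ c := by
    intro i; fin_cases i
    exacts [ha, hb.trans hb_le]
  calc ENNReal.ofReal (exp (-(lam * ((2 : ℝ) ^ (r1 + r2) - 1))))
      = iidExp (Fin 2) (Set.univ.pi fun i => Set.Ioi (c i)) := by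
        rw [iidExp_pi_Ioi hc, Fin.sum_univ_two, ← hsum]; rfl
    _ ≤ _ := by
        refine measure_mono fun z hz => ?_
        have h0 : c 0 < z 0 := hz 0 trivial
        have h1 : c 1 < z 1 := hz 1 trivial
        exact ⟨h0.le, hb_le.trans h1.le, hsum ▸ add_le_add h0.le h1.le⟩
end
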